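/- Let k be a field of characteristic zero, let R = k⟦t⟧ be the formal power series ring in one variable over k, and let M be a finitely generated R-module admitting an additive map D : M → M satisfying D(f • m) = f' • m + f • D(m) for all f ∈ R and m ∈ M, where f' denotes the formal derivative of f. Then M is a free R-module. -/

import Mathlib

/-!
Over the discrete valuation ring `k⟦X⟧` a finitely generated module is free as soon as it is
torsion-free, i.e. as soon as no nonzero `m` satisfies `X ^ n • m = 0`. By noetherianity the
submodules `ker (X ^ n)` stabilise at some `T = ker (X ^ N)`, and the Leibniz rule shows that `D`
maps `ker (X ^ n)` into `ker (X ^ (n + 1))`, hence preserves `T`. If `X ^ (j + 1)` kills both `m`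
and `D m`, then applying `D` to `X ^ (j + 1) • m = 0` gives `(j + 1) • X ^ j • m = 0`; since
`j + 1` is invertible in characteristic zero, `X ^ j` kills `m`. Descending from `j = N` to
`j = 0` gives `T = 0`.
-/

open PowerSeries Submodule

section Connection

variable {A R M : Type*} [CommRing A] [CommRing R] [Algebra A R] [AddCommGroup M] [Module R M]

def IsConnection (d : Derivation A R R) (D : M →+ M) : Prop :=
  ∀ (f : R) (m : M), D (f • m) = d f • m + f • D m

namespace IsConnection

variable {d : Derivation A R R} {D : M →+ M} {x : R} {m : M} {n : ℕ}

theorem pow_succ_smul_map_eq_zero (hD : IsConnection d D) (h : x ^ n • m = 0) :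
    x ^ (n + 1) • D m = 0 := by
  have h0 : d (x ^ n) • m + x ^ n • D m = 0 := by rw [← hD, h, map_zero]
  have hx : x * d (x ^ n) = (n * d x) * x ^ n := by
    rcases n with _ | n
    · simp
    · rw [Derivation.leibniz_pow, Nat.add_sub_cancel, smul_eq_mul, nsmul_eq_mul, pow_succ]
      ring
  calc x ^ (n + 1) • D m = -((x * d (x ^ n)) • m) := by
        rw [pow_succ', mul_smul, eq_neg_of_add_eq_zero_right h0, smul_neg, mul_smul]
    _ = 0 := by rw [hx, mul_smul, h, smul_zero, neg_zero]

theorem pow_smul_eq_zero_of_succ (hD : IsConnection d D) (hdx : IsUnit (d x))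
    (hn : IsUnit ((n + 1 : ℕ) : R)) (h : x ^ (n + 1) • m = 0) (hDm : x ^ (n + 1) • D m = 0) :
    x ^ n • m = 0 := by
  have h0 : d (x ^ (n + 1)) • m = 0 := by simpa [h, hDm] using (hD (x ^ (n + 1)) m).symm
  rw [Derivation.leibniz_pow, Nat.add_sub_cancel, smul_eq_mul, nsmul_eq_mul] at h0
  rw [← (hn.mul hdx).smul_eq_zero, smul_smul, ← h0, mul_right_comm, mul_assoc]

theorem eq_zero_of_pow_smul_eq_zero [IsNoetherian R M] (hD : IsConnection d D)
    (hdx : IsUnit (d x)) (hnat : ∀ n : ℕ, IsUnit ((n + 1 : ℕ) : R)) (h : x ^ n • m = 0) :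
    m = 0 := by
  obtain ⟨N, hN⟩ := monotone_stabilizes_iff_noetherian.mpr ‹_›
    ⟨fun n ↦ torsionBy R M (x ^ n), fun a b hab ↦ torsionBy_le_torsionBy_of_dvd _ _
      (pow_dvd_pow x hab)⟩
  have hkilled : ∀ n, ∀ m : M, x ^ n • m = 0 → x ^ N • m = 0 := by
    intro n m hm
    have hm' : m ∈ torsionBy R M (x ^ max n N) :=
      torsionBy_le_torsionBy_of_dvd _ _ (pow_dvd_pow x (le_max_left n N)) hm
    have hK : torsionBy R M (x ^ N) = torsionBy R M (x ^ max n N) := hN _ (le_max_right n N)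
    rwa [← mem_torsionBy_iff, hK]
  have hstable : ∀ m : M, x ^ N • m = 0 → x ^ N • D m = 0 := fun m hm ↦
    hkilled _ _ (hD.pow_succ_smul_map_eq_zero hm)
  have hdesc : ∀ j ≤ N, ∀ m : M, x ^ N • m = 0 → x ^ j • m = 0 := by
    intro j hj
    induction hj using Nat.decreasingInduction with
    | self => exact fun _ ↦ id
    | of_succ j _ ih =>
      exact fun m hm ↦ hD.pow_smul_eq_zero_of_succ hdx (hnat j) (ih m hm) (ih _ (hstable m hm))
  simpa using hdesc 0 N.zero_le m (hkilled n m h)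

end IsConnection

end Connection

theorem IsDiscreteValuationRing.isTorsionFree_of_pow_smul_eq_zero {R M : Type*} [CommRing R]
    [IsDomain R] [IsDiscreteValuationRing R] [AddCommGroup M] [Module R M] {ϖ : R}
    (hϖ : Irreducible ϖ) (h : ∀ (n : ℕ) (m : M), ϖ ^ n • m = 0 → m = 0) :
    Module.IsTorsionFree R M := by
  refine .of_smul_eq_zero fun r m hrm ↦ or_iff_not_imp_left.mpr fun hr ↦ ?_
  obtain ⟨n, u, rfl⟩ := eq_unit_mul_pow_irreducible hr hϖ
  rw [mul_smul, u.isUnit.smul_eq_zero] at hrm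
  exact h n m hrm

theorem PowerSeries.isUnit_natCast {k : Type*} [Field k] [CharZero k] {n : ℕ} (hn : n ≠ 0) :
    IsUnit (n : k⟦X⟧) := by
  simpa [isUnit_iff_constantCoeff] using hn

/-- Let `k` be a field of characteristic zero, `R = k⟦t⟧`, and `M` a
finitely generated `R`-module admitting an additive map `D : M → M` satisfying the
Leibniz rule `D (f • m) = f' • m + f • D m`, where `f'` is the formal derivative of
`f`. Then `M` is a free `R`-module. -/
theorem stmt5 (k : Type*) [Field k] [CharZero k]
    (M : Type*) [AddCommGroup M] [Module (PowerSeries k) M]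
    [Module.Finite (PowerSeries k) M]
    (D : M → M)
    (hadd : ∀ m n : M, D (m + n) = D m + D n)
    (hleib : ∀ (f : PowerSeries k) (m : M),
      D (f • m) = (PowerSeries.derivative k f) • m + f • D m) :
    Module.Free (PowerSeries k) M := by
  have hD : IsConnection (derivative k) (AddMonoidHom.mk' D hadd) := hleib
  have : Module.IsTorsionFree k⟦X⟧ M :=
    IsDiscreteValuationRing.isTorsionFree_of_pow_smul_eq_zero X_irreducible fun _ _ h ↦
      hD.eq_zero_of_pow_smul_eq_zero (by simp) (fun n ↦ isUnit_natCast n.succ_ne_zero) h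
  infer_instance
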